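/- arXiv:2306.16625 — 3 statements merged into one kernel-verified Lean document; each statement's English description precedes it below -/
import Mathlib

section
/- Let K be a flag simplicial complex with at least two vertices. Then either K is a simplex, or K can be written as the union of two nonempty proper full subcomplexes K' and K'' such that their intersection K' ∩ K'' is also a full subcomplex of K. -/
/-- An abstract simplicial complex on the vertex set `Fin m`: a collection of finite
subsets (simplices), containing the empty set, closed under taking subsets. -/
structure SComplex (m : ℕ) where
  faces : Set (Finset (Fin m))
  empty_mem : ∅ ∈ faces
  down_closed : ∀ ⦃s⦄, s ∈ faces → ∀ ⦃t⦄, t ⊆ s → t ∈ faces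

namespace SComplex

variable {m : ℕ}

/-- A simplicial complex is flag if every set of vertices which are pairwise
joined by edges spans a simplex. -/
def IsFlag (K : SComplex m) : Prop :=
  ∀ s : Finset (Fin m), (∀ i ∈ s, ({i} : Finset (Fin m)) ∈ K.faces) →
    (∀ i ∈ s, ∀ j ∈ s, i ≠ j → ({i, j} : Finset (Fin m)) ∈ K.faces) → s ∈ K.faces

/-- The full subcomplex of `K` with respect to a set `I` of vertices. -/
def full (K : SComplex m) (I : Set (Fin m)) : SComplex m where
  faces := {σ | σ ∈ K.faces ∧ ↑σ ⊆ I}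
  empty_mem := ⟨K.empty_mem, by simp⟩
  down_closed := by
    rintro s ⟨hs, hsI⟩ t ht
    exact ⟨K.down_closed hs ht, (Finset.coe_subset.2 ht).trans hsI⟩

/-- The vertex set of a simplicial complex. -/
def vertexSet (K : SComplex m) : Set (Fin m) := {v | ({v} : Finset (Fin m)) ∈ K.faces}

/-- `K` is a simplex: its faces are exactly all subsets of its vertex set. -/
def IsSimplex (K : SComplex m) : Prop :=
  K.faces = {σ : Finset (Fin m) | ↑σ ⊆ K.vertexSet}

end SComplex

/-!
If every two vertices of a flag complex span an edge, flagness makes every set of vertices a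
simplex. Otherwise pick vertices `v ≠ w` with `{v, w}` not a face: no simplex contains both, so
every simplex lies in one of the full subcomplexes on `{v}ᶜ` and `{w}ᶜ`, whose intersection is
the full subcomplex on the complement of `{v, w}`.
-/

namespace SComplex

variable {m : ℕ} (K : SComplex m)

@[simp]
theorem mem_full_faces {I : Set (Fin m)} {σ : Finset (Fin m)} :
    σ ∈ (K.full I).faces ↔ σ ∈ K.faces ∧ ↑σ ⊆ I :=
  Iff.rfl

theorem full_faces_inter_full_faces (I J : Set (Fin m)) :
    (K.full I).faces ∩ (K.full J).faces = (K.full (I ∩ J)).faces := by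
  ext σ
  simp only [Set.mem_inter_iff, mem_full_faces, Set.subset_inter_iff]
  tauto

theorem full_faces_ne_of_singleton_mem {I : Set (Fin m)} {v : Fin m}
    (hv : ({v} : Finset (Fin m)) ∈ K.faces) (hvI : v ∉ I) : (K.full I).faces ≠ K.faces := by
  intro h
  rw [← h, mem_full_faces] at hv
  simp_all

theorem faces_eq_full_compl_union_of_pair_notMem {v w : Fin m}
    (hvw : ({v, w} : Finset (Fin m)) ∉ K.faces) :
    K.faces = (K.full {v}ᶜ).faces ∪ (K.full {w}ᶜ).faces := by
  ext σ
  refine ⟨fun hσ => ?_, fun hσ => hσ.elim And.left And.left⟩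
  by_cases hvσ : v ∈ σ
  · refine Or.inr ⟨hσ, fun x hx hxw => hvw (K.down_closed hσ ?_)⟩
    rw [Set.mem_singleton_iff.1 hxw] at hx
    exact Finset.insert_subset hvσ (Finset.singleton_subset_iff.2 hx)
  · exact Or.inl ⟨hσ, by simpa using hvσ⟩

theorem IsFlag.isSimplex {K : SComplex m} (hK : K.IsFlag)
    (hedge : ∀ v ∈ K.vertexSet, ∀ w ∈ K.vertexSet, v ≠ w → ({v, w} : Finset (Fin m)) ∈ K.faces) :
    K.IsSimplex := by
  ext σ
  refine ⟨fun hσ v hv => K.down_closed hσ (by simpa using hv), fun hσ => ?_⟩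
  exact hK σ (fun v hv => hσ hv) fun v hv w hw => hedge v (hσ hv) w (hσ hw)

end SComplex

theorem flag_complex_simplex_or_splits_general {m : ℕ} (K : SComplex m) (hflag : K.IsFlag) :
    K.IsSimplex ∨
      ∃ I₁ I₂ : Set (Fin m),
        (∃ v, ({v} : Finset (Fin m)) ∈ (K.full I₁).faces) ∧
        (∃ v, ({v} : Finset (Fin m)) ∈ (K.full I₂).faces) ∧
        (K.full I₁).faces ≠ K.faces ∧ (K.full I₂).faces ≠ K.faces ∧
        K.faces = (K.full I₁).faces ∪ (K.full I₂).faces ∧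
        ∃ J : Set (Fin m), (K.full I₁).faces ∩ (K.full I₂).faces = (K.full J).faces := by
  by_cases hedge : ∀ v ∈ K.vertexSet, ∀ w ∈ K.vertexSet, v ≠ w →
      ({v, w} : Finset (Fin m)) ∈ K.faces
  · exact Or.inl (hflag.isSimplex hedge)
  push Not at hedge
  obtain ⟨v, hv, w, hw, hvw, hnot⟩ := hedge
  refine Or.inr ⟨{v}ᶜ, {w}ᶜ, ⟨w, hw, by simpa using hvw⟩, ⟨v, hv, by simpa using hvw.symm⟩,
    K.full_faces_ne_of_singleton_mem hv (by simp), K.full_faces_ne_of_singleton_mem hw (by simp),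
    K.faces_eq_full_compl_union_of_pair_notMem hnot, _, K.full_faces_inter_full_faces _ _⟩

/-- A flag complex with at least two vertices is either a simplex, or is
the union of two nonempty proper full subcomplexes whose intersection is again a full
subcomplex. -/
theorem flag_complex_simplex_or_splits {m : ℕ} (K : SComplex m) (hflag : K.IsFlag)
    (htwo : ∃ v w : Fin m, v ≠ w ∧ ({v} : Finset (Fin m)) ∈ K.faces ∧
      ({w} : Finset (Fin m)) ∈ K.faces) :
    K.IsSimplex ∨
      ∃ I₁ I₂ : Set (Fin m),
        (∃ v, ({v} : Finset (Fin m)) ∈ (K.full I₁).faces) ∧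
        (∃ v, ({v} : Finset (Fin m)) ∈ (K.full I₂).faces) ∧
        (K.full I₁).faces ≠ K.faces ∧ (K.full I₂).faces ≠ K.faces ∧
        K.faces = (K.full I₁).faces ∪ (K.full I₂).faces ∧
        ∃ J : Set (Fin m), (K.full I₁).faces ∩ (K.full I₂).faces = (K.full J).faces :=
  flag_complex_simplex_or_splits_general K hflag
end

section
/- If a flag complex K is the union K = K_1 ∪_{K_3} K_2 of two flag subcomplexes K_1, K_2 (full in K) along their common intersection K_3, then the graph product G^K is isomorphic to the amalgamated free product G^{K_1} *_{G^{K_3}} G^{K_2}. -/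
open Monoid in
/-- The relations of the graph product of the groups indexed by a vertex subset `I`,
with respect to the edges of `K` lying in `I`. -/
def gpRelsOn {m : ℕ} (K : SComplex m) (G : Fin m → Type) [∀ i, Group (G i)]
    (I : Set (Fin m)) : Subgroup (Monoid.CoprodI fun i : I => G i.1) :=
  Subgroup.normalClosure
    {x | ∃ (i j : I) (g : G i.1) (h : G j.1), i.1 ≠ j.1 ∧
      ({i.1, j.1} : Finset (Fin m)) ∈ K.faces ∧
      x = CoprodI.of (M := fun i : I => G i.1) (i := i) g *
            CoprodI.of (M := fun i : I => G i.1) (i := j) h *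
            (CoprodI.of (M := fun i : I => G i.1) (i := i) g)⁻¹ *
            (CoprodI.of (M := fun i : I => G i.1) (i := j) h)⁻¹}

instance {m : ℕ} (K : SComplex m) (G : Fin m → Type) [∀ i, Group (G i)] (I : Set (Fin m)) :
    (gpRelsOn K G I).Normal :=
  Subgroup.normalClosure_normal

/-- The graph product of the groups `G i`, `i ∈ I`, along the full subcomplex `K_I`. -/
abbrev GraphProdOn {m : ℕ} (K : SComplex m) (G : Fin m → Type) [∀ i, Group (G i)]
    (I : Set (Fin m)) : Type :=
  Monoid.CoprodI (fun i : I => G i.1) ⧸ gpRelsOn K G I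


/-! Both groups are presented by generators and relations. `G^K` is generated by the `G_i`
subject to the commutation relations along the edges of `K`; the pushout is generated by the
`G_i` for `i ∈ I₁` and for `i ∈ I₂`, identified over `I₁ ∩ I₂`, subject to the commutation
relations along the edges of `K_{I₁}` and of `K_{I₂}`. Every vertex lies in `I₁` or `I₂` and
every edge of `K` lies in `K_{I₁}` or `K_{I₂}`, so the two presentations agree and the
tautological homomorphisms in both directions are mutually inverse. -/

open Monoid

namespace GraphProdOn

variable {m : ℕ} (K : SComplex m) (G : Fin m → Type) [∀ i, Group (G i)]

def of {I : Set (Fin m)} (i : I) : G i.1 →* GraphProdOn K G I :=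
  (QuotientGroup.mk' _).comp (CoprodI.of (M := fun i : I => G i.1) (i := i))

theorem of_apply {I : Set (Fin m)} (i : I) (g : G i.1) :
    of K G i g = QuotientGroup.mk (CoprodI.of (M := fun i : I => G i.1) (i := i) g) :=
  rfl

theorem of_commute {I : Set (Fin m)} {i j : I} (hne : i.1 ≠ j.1)
    (hface : ({i.1, j.1} : Finset (Fin m)) ∈ K.faces) (g : G i.1) (h : G j.1) :
    Commute (of K G i g) (of K G j h) := by
  rw [← commutatorElement_eq_one_iff_commute, commutatorElement_def, of_apply, of_apply,
    ← QuotientGroup.mk_inv, ← QuotientGroup.mk_inv, ← QuotientGroup.mk_mul,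
    ← QuotientGroup.mk_mul, ← QuotientGroup.mk_mul, QuotientGroup.eq_one_iff]
  exact Subgroup.subset_normalClosure ⟨i, j, g, h, hne, hface, rfl⟩

variable {K G}

theorem hom_ext {I : Set (Fin m)} {H : Type*} [Monoid H] {f f' : GraphProdOn K G I →* H}
    (h : ∀ i g, f (of K G i g) = f' (of K G i g)) : f = f' :=
  QuotientGroup.monoidHom_ext _ <| CoprodI.ext_hom _ _ fun i => MonoidHom.ext (h i)

section Lift

variable {I : Set (Fin m)} {H : Type*} [Group H] (f : ∀ i : I, G i.1 →* H)
  (hf : ∀ i j : I, i.1 ≠ j.1 → ({i.1, j.1} : Finset (Fin m)) ∈ K.faces →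
    ∀ g h, Commute (f i g) (f j h))

def lift : GraphProdOn K G I →* H :=
  QuotientGroup.lift _ (CoprodI.lift f) <| by
    refine Subgroup.normalClosure_le_normal ?_
    rintro _ ⟨i, j, g, h, hne, hface, rfl⟩
    rw [SetLike.mem_coe, MonoidHom.mem_ker]
    simpa only [map_mul, map_inv, CoprodI.lift_of, commutatorElement_def] using
      commutatorElement_eq_one_iff_commute.mpr (hf i j hne hface g h)

@[simp]
theorem lift_of (i : I) (g : G i.1) : lift f hf (of K G i g) = f i g :=
  CoprodI.lift_of f g

end Lift

variable (K G)

def map {I J : Set (Fin m)} (hIJ : I ⊆ J) : GraphProdOn K G I →* GraphProdOn K G J :=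
  lift (fun i => of K G ⟨i.1, hIJ i.2⟩) fun i j hne hface =>
    of_commute K G (i := ⟨i.1, hIJ i.2⟩) (j := ⟨j.1, hIJ j.2⟩) hne hface

@[simp]
theorem map_of {I J : Set (Fin m)} (hIJ : I ⊆ J) (i : I) (g : G i.1) :
    map K G hIJ (of K G i g) = of K G ⟨i.1, hIJ i.2⟩ g :=
  lift_of _ _ i g

theorem map_comp_map {I J L : Set (Fin m)} (hIJ : I ⊆ J) (hJL : J ⊆ L) :
    (map K G hJL).comp (map K G hIJ) = map K G (hIJ.trans hJL) := by
  refine hom_ext fun i g => ?_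
  simp

end GraphProdOn

theorem Set.inter_subset_cond {α : Type*} (s t : Set α) (b : Bool) : s ∩ t ⊆ cond b s t := by
  cases b
  exacts [Set.inter_subset_right, Set.inter_subset_left]

theorem Set.cond_subset_union {α : Type*} (s t : Set α) (b : Bool) : cond b s t ⊆ s ∪ t := by
  cases b
  exacts [Set.subset_union_right, Set.subset_union_left]

theorem Set.exists_mem_cond_of_mem_union {α : Type*} {s t : Set α} {a : α} (h : a ∈ s ∪ t) :
    ∃ b, a ∈ cond b s t := by
  rcases h with h | h
  exacts [⟨true, h⟩, ⟨false, h⟩]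

namespace GraphProdOn

open Set

variable {m : ℕ} (K : SComplex m) (G : Fin m → Type) [∀ i, Group (G i)] (I₁ I₂ : Set (Fin m))

abbrev inclInter (b : Bool) : GraphProdOn K G (I₁ ∩ I₂) →* GraphProdOn K G (cond b I₁ I₂) :=
  map K G (inter_subset_cond I₁ I₂ b)

theorem pushoutI_of_of_inter {i : Fin m} (h₁ : i ∈ I₁) (h₂ : i ∈ I₂) (g : G i) :
    PushoutI.of (φ := inclInter K G I₁ I₂) true (of K G ⟨i, h₁⟩ g) =
      PushoutI.of (φ := inclInter K G I₁ I₂) false (of K G ⟨i, h₂⟩ g) := by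
  have hb (b : Bool) (hb : i ∈ cond b I₁ I₂) :
      PushoutI.of (φ := inclInter K G I₁ I₂) b (of K G ⟨i, hb⟩ g) =
        PushoutI.base _ (of K G (⟨i, h₁, h₂⟩ : ↥(I₁ ∩ I₂)) g) := by
    rw [← PushoutI.of_apply_eq_base, map_of]
  rw [hb true h₁, hb false h₂]

open Classical in
noncomputable def toPushoutI (i : ↥(I₁ ∪ I₂)) : G i.1 →* PushoutI (inclInter K G I₁ I₂) :=
  if h : i.1 ∈ I₁ then (PushoutI.of true).comp (of K G ⟨i.1, h⟩)
  else (PushoutI.of false).comp (of K G ⟨i.1, i.2.resolve_left h⟩)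

theorem toPushoutI_apply (b : Bool) (i : ↥(I₁ ∪ I₂)) (hi : i.1 ∈ cond b I₁ I₂) (g : G i.1) :
    toPushoutI K G I₁ I₂ i g = PushoutI.of b (of K G ⟨i.1, hi⟩ g) := by
  unfold toPushoutI
  split_ifs with h₁
  · cases b
    · exact pushoutI_of_of_inter K G I₁ I₂ h₁ hi g
    · rfl
  · cases b
    · rfl
    · exact absurd hi h₁

variable {K G I₁ I₂}

theorem toPushoutI_commute (hcover : ∀ σ ∈ K.faces, ↑σ ⊆ I₁ ∪ I₂ → ↑σ ⊆ I₁ ∨ ↑σ ⊆ I₂)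
    (i j : ↥(I₁ ∪ I₂)) (hne : i.1 ≠ j.1) (hface : ({i.1, j.1} : Finset (Fin m)) ∈ K.faces)
    (g : G i.1) (h : G j.1) :
    Commute (toPushoutI K G I₁ I₂ i g) (toPushoutI K G I₁ I₂ j h) := by
  have hsub : ∃ b, (↑({i.1, j.1} : Finset (Fin m)) : Set (Fin m)) ⊆ cond b I₁ I₂ := by
    have hij : (↑({i.1, j.1} : Finset (Fin m)) : Set (Fin m)) ⊆ I₁ ∪ I₂ := by
      simp [Set.insert_subset_iff]
    rcases hcover _ hface hij with h | h
    exacts [⟨true, h⟩, ⟨false, h⟩]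
  obtain ⟨b, hb⟩ := hsub
  have hi : i.1 ∈ cond b I₁ I₂ := hb (by simp)
  have hj : j.1 ∈ cond b I₁ I₂ := hb (by simp)
  rw [toPushoutI_apply K G I₁ I₂ b i hi, toPushoutI_apply K G I₁ I₂ b j hj]
  exact (of_commute K G (i := ⟨i.1, hi⟩) (j := ⟨j.1, hj⟩) hne hface g h).map _

noncomputable def pushoutIEquiv (hcover : ∀ σ ∈ K.faces, ↑σ ⊆ I₁ ∪ I₂ → ↑σ ⊆ I₁ ∨ ↑σ ⊆ I₂) :
    GraphProdOn K G (I₁ ∪ I₂) ≃* PushoutI (inclInter K G I₁ I₂) :=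
  MonoidHom.toMulEquiv (lift (toPushoutI K G I₁ I₂) (toPushoutI_commute hcover))
    (PushoutI.lift (fun b => map K G (cond_subset_union I₁ I₂ b))
      (map K G inf_le_sup) fun b => map_comp_map K G _ _)
    (by
      refine hom_ext fun i g => ?_
      obtain ⟨b, hb⟩ := exists_mem_cond_of_mem_union i.2
      simp [toPushoutI_apply K G I₁ I₂ b i hb])
    (by
      refine PushoutI.hom_ext_nonempty fun b => ?_
      refine hom_ext fun i g => ?_
      simp [toPushoutI_apply K G I₁ I₂ b ⟨i.1, cond_subset_union I₁ I₂ b i.2⟩ i.2])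

end GraphProdOn

theorem graphProd_amalgam_general {m : ℕ} (K : SComplex m)
    (hvert : ∀ i : Fin m, ({i} : Finset (Fin m)) ∈ K.faces)
    (G : Fin m → Type) [∀ i, Group (G i)]
    (I₁ I₂ : Set (Fin m))
    (hcover : ∀ σ ∈ K.faces, ↑σ ⊆ I₁ ∨ ↑σ ⊆ I₂)
    (φ : ∀ b : Bool, GraphProdOn K G (I₁ ∩ I₂) →* GraphProdOn K G (cond b I₁ I₂))
    (hφ₁ : ∀ (i : ↥(I₁ ∩ I₂)) (g : G i.1),
      φ true (QuotientGroup.mk (Monoid.CoprodI.of g)) =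
        QuotientGroup.mk (Monoid.CoprodI.of (i := (⟨i.1, i.2.1⟩ : ↥I₁)) g))
    (hφ₂ : ∀ (i : ↥(I₁ ∩ I₂)) (g : G i.1),
      φ false (QuotientGroup.mk (Monoid.CoprodI.of g)) =
        QuotientGroup.mk (Monoid.CoprodI.of (i := (⟨i.1, i.2.2⟩ : ↥I₂)) g)) :
    Nonempty (GraphProdOn K G Set.univ ≃* Monoid.PushoutI φ) := by
  have hunion : I₁ ∪ I₂ = Set.univ := Set.eq_univ_of_forall fun i => by
    rcases hcover {i} (hvert i) with h | h
    exacts [Or.inl (h (by simp)), Or.inr (h (by simp))]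
  have hφ : φ = GraphProdOn.inclInter K G I₁ I₂ := by
    funext b
    refine GraphProdOn.hom_ext fun i g => ?_
    rw [GraphProdOn.map_of]
    cases b
    exacts [hφ₂ i g, hφ₁ i g]
  subst hφ
  rw [← hunion]
  exact ⟨GraphProdOn.pushoutIEquiv fun σ hσ _ => hcover σ hσ⟩

/-- If a flag complex `K` is the union of two full flag subcomplexes
`K_{I₁}`, `K_{I₂}` along their intersection `K_{I₁ ∩ I₂}`, then the graph product `G^K`
is the amalgamated free product `G^{K_{I₁}} *_{G^{K_{I₁ ∩ I₂}}} G^{K_{I₂}}`. -/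
theorem graphProd_amalgam {m : ℕ} (K : SComplex m) (hflag : K.IsFlag)
    (hvert : ∀ i : Fin m, ({i} : Finset (Fin m)) ∈ K.faces)
    (G : Fin m → Type) [∀ i, Group (G i)]
    (I₁ I₂ : Set (Fin m))
    (hcover : ∀ σ ∈ K.faces, ↑σ ⊆ I₁ ∨ ↑σ ⊆ I₂)
    (φ : ∀ b : Bool, GraphProdOn K G (I₁ ∩ I₂) →* GraphProdOn K G (cond b I₁ I₂))
    (hφ₁ : ∀ (i : ↥(I₁ ∩ I₂)) (g : G i.1),
      φ true (QuotientGroup.mk (Monoid.CoprodI.of g)) =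
        QuotientGroup.mk (Monoid.CoprodI.of (i := (⟨i.1, i.2.1⟩ : ↥I₁)) g))
    (hφ₂ : ∀ (i : ↥(I₁ ∩ I₂)) (g : G i.1),
      φ false (QuotientGroup.mk (Monoid.CoprodI.of g)) =
        QuotientGroup.mk (Monoid.CoprodI.of (i := (⟨i.1, i.2.2⟩ : ↥I₂)) g))
    (hinj : ∀ b, Function.Injective (φ b)) :
    Nonempty (GraphProdOn K G Set.univ ≃* Monoid.PushoutI φ) :=
  graphProd_amalgam_general K hvert G I₁ I₂ hcover φ hφ₁ hφ₂
end

section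
/- Let K^1 be the 1-skeleton of a flag complex K. Then K^1 is a chordal graph if and only if H_1(K_I; k) = 0 for every full subcomplex K_I of K (for a field k). -/
/-- The simplicial boundary of a single (oriented) simplex, with orientation induced
by the natural order on `Fin m`. -/
noncomputable def bdryChain (k : Type) [Field k] {m : ℕ} (σ : Finset (Fin m)) :
    Finset (Fin m) →₀ k :=
  ∑ i ∈ σ, ((-1 : k) ^ (σ.filter (· < i)).card) • Finsupp.single (σ.erase i) (1 : k)

/-- The simplicial boundary operator on chains with coefficients in `k`. -/
noncomputable def bdry (k : Type) [Field k] (m : ℕ) :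
    (Finset (Fin m) →₀ k) →ₗ[k] (Finset (Fin m) →₀ k) :=
  Finsupp.lsum k fun σ => LinearMap.toSpanSingleton k _ (bdryChain k σ)

/-- A (flag) complex has chordal 1-skeleton if every simplicial cycle of length at
least 4 has a chord. -/
def IsChordal {m : ℕ} (K : SComplex m) : Prop :=
  ∀ c : List (Fin m), c.Nodup → ∀ h4 : 4 ≤ c.length,
    (∀ j : Fin c.length,
      ({c.get j, c.get ⟨(j.1 + 1) % c.length, Nat.mod_lt _ (by omega)⟩} :
        Finset (Fin m)) ∈ K.faces) →
    ∃ a b : Fin c.length,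
      ({c.get a, c.get b} : Finset (Fin m)) ∈ K.faces ∧ a ≠ b ∧
        (a.1 + 1) % c.length ≠ b.1 ∧ (b.1 + 1) % c.length ≠ a.1


/-!
Forward direction: a nonzero 1-cycle `x` of `K_I` has no vertex of degree one in its support
(its boundary vanishes), so the support contains a circuit `c`. Such a circuit bounds in `K_I`:
by chordality a circuit of length at least 4 has a chord, which splits it into two shorter
circuits whose chains add up to the chain of `c`, and a triangle spans a 2-simplex because `K`
is flag. Subtracting the right multiple of the chain of `c` from `x` shrinks the support of `x`.

Backward direction: a chordless cycle `c` of length at least 4 is a nonzero 1-cycle of `K_I`,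
`I` the vertex set of `c`, while `K_I` has no 2-simplices, so the cycle cannot bound.
-/

open Finsupp

theorem Nat.add_one_mod_eq_or {p n : ℕ} (hp : p < n) :
    (p + 1) % n = p + 1 ∧ p + 1 < n ∨ (p + 1) % n = 0 ∧ p + 1 = n := by
  rcases Nat.lt_or_ge (p + 1) n with h | h
  · exact .inl ⟨Nat.mod_eq_of_lt h, h⟩
  · obtain h : p + 1 = n := by omega
    exact .inr ⟨by rw [h, Nat.mod_self], h⟩

theorem Nat.le_three_of_cyclic_triangle {n i j l : ℕ} (hi : i < n) (hj : j < n) (hl : l < n)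
    (h₁ : (i + 1) % n = j ∨ (j + 1) % n = i) (h₂ : (j + 1) % n = l ∨ (l + 1) % n = j)
    (h₃ : (i + 1) % n = l ∨ (l + 1) % n = i) : n ≤ 3 := by
  have := Nat.add_one_mod_eq_or hi
  have := Nat.add_one_mod_eq_or hj
  have := Nat.add_one_mod_eq_or hl
  omega

theorem List.eq_take_append_cons_append_cons {α : Type*} {l : List α} {i j : ℕ} (hij : i < j)
    (hj : j < l.length) :
    l = l.take i ++ l[i] :: ((l.drop (i + 1)).take (j - i - 1) ++ l[j] :: l.drop (j + 1)) := by
  conv_lhs => rw [← List.take_append_drop i l, List.drop_eq_getElem_cons (by omega),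
    ← List.take_append_drop (j - i - 1) (l.drop (i + 1)), List.drop_drop,
    show i + 1 + (j - i - 1) = j by omega, List.drop_eq_getElem_cons hj]

theorem Cycle.chain_coe_iff_getElem {α : Type*} {R : α → α → Prop} {l : List α} :
    Cycle.Chain R (l : Cycle α) ↔
      ∀ (i : ℕ) (hi : i < l.length),
        R l[i] (l[(i + 1) % l.length]'(Nat.mod_lt _ (by omega))) := by
  cases l with
  | nil => simp
  | cons a l =>
    have key (j : ℕ) (hj : j < (a :: l ++ [a]).length) :
        (a :: l ++ [a])[j] = (a :: l)[j % (a :: l).length]'(Nat.mod_lt _ (by simp)) := by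
      rw [List.getElem_append]
      split_ifs with h
      · simp only [Nat.mod_eq_of_lt h]
      · obtain rfl : j = (a :: l).length := by simp only [List.length_append, List.length_cons, List.length_nil] at hj h ⊢; omega
        simp
    rw [Cycle.chain_coe_cons, ← List.cons_append, List.isChain_iff_getElem]
    constructor
    · intro h i hi
      have := h i (by simp only [List.length_append, List.length_cons, List.length_nil] at hi ⊢; omega)
      rw [key, key] at this
      simpa only [Nat.mod_eq_of_lt hi] using this
    · intro h i hi
      have hi' : i < (a :: l).length := by
        simp only [List.length_append, List.length_cons, List.length_nil] at hi ⊢; omega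
      rw [key, key]
      simpa only [Nat.mod_eq_of_lt hi'] using h i hi'

theorem Cycle.Chain.split {α : Type*} {R : α → α → Prop} {u v : α} {Q S : List α}
    (h : Cycle.Chain R (u :: (Q ++ v :: S) : List α)) (huv : R u v) (hvu : R v u) :
    Cycle.Chain R (u :: (Q ++ [v]) : List α) ∧ Cycle.Chain R (v :: (S ++ [u]) : List α) := by
  rw [Cycle.chain_coe_cons] at h
  rw [Cycle.chain_coe_cons, Cycle.chain_coe_cons]
  have h₁ : (u :: Q ++ [v]).IsChain R := h.prefix ⟨S ++ [u], by simp⟩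
  have h₂ : (v :: S ++ [u]).IsChain R := h.suffix ⟨u :: Q, by simp⟩
  constructor
  · simpa using h₁.append (.singleton u) (by rw [List.getLast?_concat]; simpa using hvu)
  · simpa using h₂.append (.singleton v) (by rw [List.getLast?_concat]; simpa using huv)

theorem exists_cycle_of_isChain {α : Type*} [Fintype α] {Adj : α → α → Prop}
    (hsymm : ∀ u v, Adj u v → Adj v u) (hirr : ∀ u, ¬Adj u u)
    (hdeg : ∀ u v, Adj u v → ∃ w, Adj u w ∧ w ≠ v) :
    ∀ p : List α, p.Nodup → 2 ≤ p.length → p.IsChain Adj →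
      ∃ c : List α, c.Nodup ∧ 3 ≤ c.length ∧ Cycle.Chain Adj (c : Cycle α)
  | [], _, h, _ | [_], _, h, _ => by simp at h
  | v₀ :: v₁ :: q, hnd, _, hp => by
    obtain ⟨w, hw, hwv₁⟩ := hdeg v₀ v₁ (List.isChain_cons_cons.1 hp).1
    by_cases hwp : w ∈ v₀ :: v₁ :: q
    · have hwq : w ∈ q := by
        simp only [List.mem_cons] at hwp
        exact hwp.resolve_left (fun h => hirr _ (h ▸ hw)) |>.resolve_left hwv₁
      obtain ⟨q₁, q₂, rfl⟩ := List.append_of_mem hwq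
      refine ⟨v₀ :: v₁ :: (q₁ ++ [w]), hnd.sublist (by simp), by simp, ?_⟩
      have hpre : (v₀ :: v₁ :: q₁ ++ [w]).IsChain Adj := hp.prefix ⟨q₂, by simp⟩
      have hclose := hpre.append (List.isChain_singleton v₀) (by
        rw [List.getLast?_concat]
        simpa using hsymm _ _ hw)
      rw [Cycle.chain_coe_cons]
      simpa using hclose
    · have := (List.nodup_cons.2 ⟨hwp, hnd⟩).length_le_card
      exact exists_cycle_of_isChain hsymm hirr hdeg (w :: v₀ :: v₁ :: q)
        (List.nodup_cons.2 ⟨hwp, hnd⟩) (by simp) (.cons_cons (hsymm _ _ hw) hp)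
termination_by p => Fintype.card α - p.length
decreasing_by simp_all; omega

theorem Finsupp.card_support_sub_smul_lt {α k : Type*} [Field k] {x z : α →₀ k}
    (hz : z.support ⊆ x.support) {a : α} (ha : z a ≠ 0) :
    (x - (x a / z a) • z).support.card < x.support.card := by
  classical
  refine Finset.card_lt_card
    ((Finset.ssubset_iff_of_subset ?_).2 ⟨a, hz (mem_support_iff.2 ha), ?_⟩)
  · exact support_sub.trans (Finset.union_subset le_rfl (support_smul.trans hz))
  · simp [div_mul_cancel₀ _ ha]

namespace SComplex

variable {m : ℕ} {L : SComplex m}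

theorem IsFlag.full (hL : L.IsFlag) (I : Set (Fin m)) : (L.full I).IsFlag := by
  intro s hv he
  exact ⟨hL s (fun i hi => (hv i hi).1) (fun i hi j hj hij => (he i hi j hj hij).1),
    fun i hi => (hv i hi).2 (by simp)⟩

theorem IsFlag.triangle_mem (hL : L.IsFlag) {a b c : Fin m} (hab : {a, b} ∈ L.faces)
    (hbc : {b, c} ∈ L.faces) (hca : {c, a} ∈ L.faces) : {a, b, c} ∈ L.faces := by
  refine hL _ (fun i hi => ?_) (fun i hi j hj hij => ?_)
  · simp only [Finset.mem_insert, Finset.mem_singleton] at hi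
    rcases hi with rfl | rfl | rfl
    · exact L.down_closed hab (by simp)
    · exact L.down_closed hbc (by simp)
    · exact L.down_closed hca (by simp)
  · simp only [Finset.mem_insert, Finset.mem_singleton] at hi hj
    rcases hi with rfl | rfl | rfl <;> rcases hj with rfl | rfl | rfl <;>
      first | exact absurd rfl hij | assumption | rwa [Finset.pair_comm]

variable (k : Type) [Field k]

/-- Chains supported on the faces of `L` with `i` vertices: `L.chains k 2` are the 1-chains. -/
noncomputable def chains (L : SComplex m) (i : ℕ) : Submodule k (Finset (Fin m) →₀ k) :=
  Finsupp.supported k k {σ | σ ∈ L.faces ∧ σ.card = i}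

noncomputable def boundaries (L : SComplex m) : Submodule k (Finset (Fin m) →₀ k) :=
  (L.chains k 3).map (bdry k m)

variable {k}

theorem mem_chains {i : ℕ} {x : Finset (Fin m) →₀ k} :
    x ∈ L.chains k i ↔ ∀ σ ∈ x.support, σ ∈ L.faces ∧ σ.card = i :=
  Finsupp.mem_supported k x

theorem mem_boundaries {x : Finset (Fin m) →₀ k} :
    x ∈ L.boundaries k ↔ ∃ y ∈ L.chains k 3, bdry k m y = x :=
  Submodule.mem_map

end SComplex

section Chains

variable (k : Type) [Field k] {m : ℕ}

theorem bdry_single (σ : Finset (Fin m)) (a : k) :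
    bdry k m (single σ a) = a • bdryChain k σ := by
  simp [bdry]

theorem bdry_apply (x : Finset (Fin m) →₀ k) (ρ : Finset (Fin m)) :
    bdry k m x ρ = x.sum fun σ a => a * bdryChain k σ ρ := by
  simp [bdry, Finsupp.lsum_apply, Finsupp.sum_apply]

theorem bdryChain_pair {a b : Fin m} (h : a < b) :
    bdryChain k {a, b} = single {b} 1 - single {a} 1 := by
  simp [bdryChain, Finset.sum_pair h.ne, Finset.filter_insert, Finset.filter_singleton, h,
    h.not_gt, h.ne, Finset.erase_insert_of_ne, sub_eq_add_neg, add_comm]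

theorem bdryChain_triple {a b c : Fin m} (hab : a < b) (hbc : b < c) :
    bdryChain k {a, b, c} = single {b, c} 1 - single {a, c} 1 + single {a, b} 1 := by
  have hac := hab.trans hbc
  simp [bdryChain, Finset.sum_insert, Finset.filter_insert, Finset.filter_singleton, hab, hbc,
    hac, hab.not_gt, hbc.not_gt, hac.not_gt, hab.ne, hbc.ne, hac.ne, Finset.erase_insert_of_ne,
    sub_eq_add_neg]
  abel

theorem bdryChain_apply_of_not_subset {σ ρ : Finset (Fin m)} (h : ¬ρ ⊆ σ) :
    bdryChain k σ ρ = 0 := by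
  rw [bdryChain, Finsupp.finsetSum_apply]
  refine Finset.sum_eq_zero fun i _ => ?_
  have hne : σ.erase i ≠ ρ := fun he => h (he ▸ Finset.erase_subset i σ)
  rw [Finsupp.smul_apply, Finsupp.single_eq_of_ne hne.symm, smul_zero]

theorem bdryChain_pair_apply_left {u v : Fin m} (h : u ≠ v) : bdryChain k {u, v} {u} ≠ 0 := by
  rcases h.lt_or_gt with h | h
  · simp [bdryChain_pair k h, h.ne']
  · simp [Finset.pair_comm u v, bdryChain_pair k h, h.ne]

theorem exists_ne_mem_support_of_bdry_eq_zero {x : Finset (Fin m) →₀ k}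
    (hx : ∀ σ ∈ x.support, σ.card = 2) (hb : bdry k m x = 0) {u v : Fin m}
    (huv : {u, v} ∈ x.support) : ∃ w, {u, w} ∈ x.support ∧ w ≠ v := by
  by_contra! hno
  have hne : u ≠ v := fun h => by simpa [h] using hx _ huv
  have hsum : bdry k m x {u} = x {u, v} * bdryChain k {u, v} {u} := by
    rw [bdry_apply, Finsupp.sum, Finset.sum_eq_single_of_mem _ huv]
    intro σ hσ hσne
    suffices u ∉ σ by rw [bdryChain_apply_of_not_subset k (by simpa), mul_zero]
    intro hu
    obtain ⟨w, hw⟩ := Finset.card_eq_one.1 (by rw [Finset.card_erase_of_mem hu, hx σ hσ])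
    rw [← Finset.insert_erase hu, hw] at hσ hσne
    exact hσne (by rw [hno w hσ])
  rw [hb, Finsupp.zero_apply] at hsum
  exact mul_ne_zero (Finsupp.mem_support_iff.1 huv) (bdryChain_pair_apply_left k hne) hsum.symm

noncomputable def orientedEdge (u v : Fin m) : Finset (Fin m) →₀ k :=
  if u < v then single {u, v} 1 else -single {u, v} 1

theorem bdry_orientedEdge {u v : Fin m} (h : u ≠ v) :
    bdry k m (orientedEdge k u v) = single {v} 1 - single {u} 1 := by
  rcases h.lt_or_gt with h | h
  · rw [orientedEdge, if_pos h, bdry_single, bdryChain_pair k h, one_smul]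
  · rw [orientedEdge, if_neg h.not_gt, map_neg, bdry_single, Finset.pair_comm,
      bdryChain_pair k h, one_smul, neg_sub]

theorem orientedEdge_swap {u v : Fin m} (h : u ≠ v) :
    orientedEdge k v u = -orientedEdge k u v := by
  rcases h.lt_or_gt with h | h
  · rw [orientedEdge, orientedEdge, if_neg h.not_gt, if_pos h, Finset.pair_comm]
  · rw [orientedEdge, orientedEdge, if_pos h, if_neg h.not_gt, Finset.pair_comm, neg_neg]

theorem support_orientedEdge (u v : Fin m) : (orientedEdge k u v).support ⊆ {{u, v}} := by
  unfold orientedEdge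
  split_ifs
  · exact support_single_subset
  · exact (support_neg _).trans_subset support_single_subset

theorem orientedEdge_apply_self (u v : Fin m) : orientedEdge k u v {u, v} ≠ 0 := by
  unfold orientedEdge
  split_ifs <;> simp

noncomputable def pathChain : List (Fin m) → Finset (Fin m) →₀ k
  | a :: b :: l => orientedEdge k a b + pathChain (b :: l)
  | _ => 0

@[simp] theorem pathChain_nil : pathChain k ([] : List (Fin m)) = 0 := rfl

@[simp] theorem pathChain_singleton (a : Fin m) : pathChain k [a] = 0 := rfl

@[simp] theorem pathChain_cons_cons (a b : Fin m) (l : List (Fin m)) :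
    pathChain k (a :: b :: l) = orientedEdge k a b + pathChain k (b :: l) := rfl

theorem pathChain_append_cons (l₁ : List (Fin m)) (x : Fin m) (l₂ : List (Fin m)) :
    pathChain k (l₁ ++ x :: l₂) = pathChain k (l₁ ++ [x]) + pathChain k (x :: l₂) := by
  match l₁ with
  | [] => simp
  | [a] => simp
  | a :: b :: l₁ =>
    simp only [List.cons_append, pathChain_cons_cons, add_assoc]
    rw [← List.cons_append, pathChain_append_cons (b :: l₁), List.cons_append]

theorem bdry_pathChain (a : Fin m) (l : List (Fin m)) (h : (a :: l).IsChain (· ≠ ·)) :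
    bdry k m (pathChain k (a :: l)) =
      single {(a :: l).getLast (List.cons_ne_nil a l)} 1 - single {a} 1 := by
  induction l generalizing a with
  | nil => simp
  | cons b l ih =>
    obtain ⟨hab, h⟩ := List.isChain_cons_cons.1 h
    rw [pathChain_cons_cons, map_add, bdry_orientedEdge k hab, ih b h, List.getLast_cons_cons]
    abel

theorem exists_rel_of_mem_support_pathChain {R : Fin m → Fin m → Prop} {l : List (Fin m)}
    (hl : l.IsChain R) {σ : Finset (Fin m)} (hσ : σ ∈ (pathChain k l).support) :
    ∃ u v, R u v ∧ σ = {u, v} := by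
  match l, hl with
  | [], _ | [_], _ => simp at hσ
  | a :: b :: l, hl =>
    obtain ⟨hab, hl⟩ := List.isChain_cons_cons.1 hl
    rcases Finset.mem_union.1 (support_add hσ) with h | h
    · exact ⟨a, b, hab, Finset.mem_singleton.1 (support_orientedEdge k a b h)⟩
    · exact exists_rel_of_mem_support_pathChain hl h

noncomputable def cycleChain (c : List (Fin m)) : Finset (Fin m) →₀ k :=
  pathChain k (c ++ c.take 1)

theorem cycleChain_cons (a : Fin m) (l : List (Fin m)) :
    cycleChain k (a :: l) = pathChain k (a :: (l ++ [a])) := rfl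

theorem cycleChain_rotate_one (c : List (Fin m)) :
    cycleChain k (c.rotate 1) = cycleChain k c := by
  match c with
  | [] | [_] => simp
  | a :: b :: l =>
    have hb : b :: (l ++ [a] ++ [b]) = (b :: l) ++ a :: [b] := by simp
    rw [List.rotate_cons_succ, List.rotate_zero, List.cons_append, cycleChain_cons,
      cycleChain_cons, hb, pathChain_append_cons, pathChain_cons_cons, add_comm]
    simp

theorem cycleChain_eq_of_isRotated {c c' : List (Fin m)} (h : c ~r c') :
    cycleChain k c = cycleChain k c' := by
  obtain ⟨n, rfl⟩ := h
  induction n with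
  | zero => rw [List.rotate_zero]
  | succ n ih => rw [← List.rotate_rotate, cycleChain_rotate_one, ih]

theorem cycleChain_append_cons {u v : Fin m} (h : u ≠ v) (Q R : List (Fin m)) :
    cycleChain k (u :: (Q ++ v :: R)) =
      cycleChain k (u :: (Q ++ [v])) + cycleChain k (v :: (R ++ [u])) := by
  have e₁ : u :: (Q ++ v :: R ++ [u]) = (u :: Q) ++ v :: (R ++ [u]) := by simp
  have e₂ : u :: (Q ++ [v] ++ [u]) = (u :: Q) ++ v :: [u] := by simp
  have e₃ : v :: (R ++ [u] ++ [v]) = (v :: R) ++ u :: [v] := by simp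
  rw [cycleChain_cons, cycleChain_cons, cycleChain_cons, e₁, e₂, e₃,
    pathChain_append_cons k (u :: Q) v, pathChain_append_cons k (u :: Q) v [u],
    pathChain_append_cons k (v :: R) u [v], pathChain_cons_cons, pathChain_cons_cons,
    orientedEdge_swap k h]
  simp only [List.cons_append, pathChain_singleton, add_zero]
  abel

theorem bdry_cycleChain {c : List (Fin m)} (hc : Cycle.Chain (· ≠ ·) (c : Cycle (Fin m))) :
    bdry k m (cycleChain k c) = 0 := by
  cases c with
  | nil => simp [cycleChain]
  | cons a l =>
    rw [cycleChain_cons, bdry_pathChain k a _ ((Cycle.chain_coe_cons _ a l).1 hc)]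
    simp

theorem exists_rel_of_mem_support_cycleChain {R : Fin m → Fin m → Prop} {c : List (Fin m)}
    (hc : Cycle.Chain R (c : Cycle (Fin m))) {σ : Finset (Fin m)}
    (hσ : σ ∈ (cycleChain k c).support) : ∃ u v, R u v ∧ σ = {u, v} := by
  cases c with
  | nil => simp [cycleChain] at hσ
  | cons a l => exact exists_rel_of_mem_support_pathChain k ((Cycle.chain_coe_cons _ a l).1 hc) hσ

theorem cycleChain_apply_ne_zero {a b : Fin m} {l : List (Fin m)} (hnd : (a :: b :: l).Nodup)
    (hl : l ≠ []) : cycleChain k (a :: b :: l) {a, b} ≠ 0 := by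
  obtain ⟨c, l, rfl⟩ := List.exists_cons_of_ne_nil hl
  simp only [List.nodup_cons, List.mem_cons, not_or] at hnd
  have hrest : pathChain k (b :: (c :: l ++ [a])) {a, b} = 0 := by
    by_contra hne
    have hchain : (b :: (c :: l ++ [a])).IsChain
        fun u v => ({u, v} : Finset (Fin m)) ≠ {a, b} := by
      refine .cons_cons ?_ (List.pairwise_of_forall_mem_list fun u hu v hv h => ?_).isChain
      · intro h
        have : c ∈ ({a, b} : Finset (Fin m)) := h ▸ by simp
        simp only [Finset.mem_insert, Finset.mem_singleton] at this
        rcases this with rfl | rfl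
        exacts [hnd.1.2.1 rfl, hnd.2.1.1 rfl]
      · have hb : b ∉ c :: l ++ [a] := by simp [hnd.2.1.1, hnd.2.1.2, Ne.symm hnd.1.1]
        have : b ∈ ({u, v} : Finset (Fin m)) := h ▸ by simp
        simp only [Finset.mem_insert, Finset.mem_singleton] at this
        rcases this with rfl | rfl <;> contradiction
    obtain ⟨u, v, huv, h⟩ :=
      exists_rel_of_mem_support_pathChain k hchain (mem_support_iff.2 hne)
    exact huv h.symm
  rw [cycleChain_cons, List.cons_append, pathChain_cons_cons, Finsupp.add_apply, hrest, add_zero]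
  exact orientedEdge_apply_self k a b

theorem cycleChain_ne_zero {c : List (Fin m)} (hnd : c.Nodup) (h3 : 3 ≤ c.length) :
    cycleChain k c ≠ 0 := by
  match c, hnd, h3 with
  | a :: b :: d :: l, hnd, _ =>
    exact Finsupp.ne_iff.2 ⟨_, cycleChain_apply_ne_zero k hnd (by simp)⟩

theorem cycleChain_triple_of_lt {a b c : Fin m} (hab : a < b) (hbc : b < c) :
    cycleChain k [a, b, c] = bdryChain k {a, b, c} := by
  have hac := hab.trans hbc
  simp only [cycleChain_cons, List.cons_append, List.nil_append, pathChain_cons_cons, orientedEdge,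
    hab, hbc, hac.not_gt, if_true, if_false, Finset.pair_comm c a, pathChain_singleton, add_zero,
    bdryChain_triple k hab hbc]
  abel

theorem cycleChain_triple_swap {a b c : Fin m} (hab : a ≠ b) (hbc : b ≠ c) (hac : a ≠ c) :
    cycleChain k [b, a, c] = -cycleChain k [a, b, c] := by
  simp only [cycleChain_cons, List.cons_append, List.nil_append, pathChain_cons_cons,
    pathChain_singleton, add_zero, orientedEdge_swap k hab, orientedEdge_swap k hbc,
    orientedEdge_swap k hac]
  abel

theorem cycleChain_triple {a b c : Fin m} (hab : a ≠ b) (hbc : b ≠ c) (hac : a ≠ c) :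
    cycleChain k [a, b, c] = bdryChain k {a, b, c} ∨
      cycleChain k [a, b, c] = -bdryChain k {a, b, c} := by
  have rot (x y z : Fin m) : cycleChain k [y, z, x] = cycleChain k [x, y, z] :=
    cycleChain_rotate_one k [x, y, z]
  have swap := cycleChain_triple_swap k hab hbc hac
  rcases hab.lt_or_gt with h₁ | h₁ <;> rcases hbc.lt_or_gt with h₂ | h₂ <;>
    rcases hac.lt_or_gt with h₃ | h₃
  · exact .inl (cycleChain_triple_of_lt k h₁ h₂)
  · exact absurd (h₁.trans h₂) h₃.not_gt
  · rw [← neg_neg (cycleChain k _), ← swap, ← rot b a c, cycleChain_triple_of_lt k h₃ h₂]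
    exact .inr (by congr 2; grind)
  · rw [rot c a b, cycleChain_triple_of_lt k h₃ h₁]
    exact .inl (by congr 1; grind)
  · rw [← neg_neg (cycleChain k _), ← swap, cycleChain_triple_of_lt k h₁ h₃]
    exact .inr (by congr 2; grind)
  · rw [← rot a b c, cycleChain_triple_of_lt k h₂ h₃]
    exact .inl (by congr 1; grind)
  · exact absurd (h₂.trans h₁) h₃.not_gt
  · rw [← neg_neg (cycleChain k _), ← swap, rot c b a, cycleChain_triple_of_lt k h₂ h₁]
    exact .inr (by congr 2; grind)

end Chains

section Boundaries

variable {k : Type} [Field k] {m : ℕ} {L K : SComplex m} {I : Set (Fin m)}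

theorem SComplex.bdryChain_mem_boundaries {σ : Finset (Fin m)} (hσ : σ ∈ L.faces)
    (h3 : σ.card = 3) : bdryChain k σ ∈ L.boundaries k :=
  ⟨single σ 1, Finsupp.single_mem_supported k 1 ⟨hσ, h3⟩, by rw [bdry_single, one_smul]⟩

theorem cycleChain_triangle_mem_boundaries (hL : L.IsFlag) {a b d : Fin m}
    (hnd : [a, b, d].Nodup)
    (hc : Cycle.Chain (fun u v => ({u, v} : Finset (Fin m)) ∈ L.faces)
      ([a, b, d] : Cycle (Fin m))) :
    cycleChain k [a, b, d] ∈ L.boundaries k := by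
  simp only [Cycle.chain_coe_cons, List.cons_append, List.nil_append, List.isChain_cons_cons,
    List.isChain_singleton, and_true] at hc
  simp only [List.nodup_cons, List.mem_cons, List.not_mem_nil, not_or] at hnd
  obtain ⟨⟨hab, had, -⟩, ⟨hbd, -⟩, -⟩ := hnd
  have htri := hL.triangle_mem hc.1 hc.2.1 hc.2.2
  have hcard : ({a, b, d} : Finset (Fin m)).card = 3 :=
    Finset.card_eq_three.2 ⟨a, b, d, hab, had, hbd, rfl⟩
  rcases cycleChain_triple k hab hbd had with h | h <;> rw [h]
  · exact SComplex.bdryChain_mem_boundaries htri hcard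
  · exact neg_mem (SComplex.bdryChain_mem_boundaries htri hcard)

theorem IsChordal.exists_chord (hK : IsChordal K) {c : List (Fin m)} (hnd : c.Nodup)
    (h4 : 4 ≤ c.length)
    (hc : Cycle.Chain (fun u v => ({u, v} : Finset (Fin m)) ∈ K.faces) (c : Cycle (Fin m))) :
    ∃ u v Q R, c ~r u :: (Q ++ v :: R) ∧ Q ≠ [] ∧ R ≠ [] ∧
      ({u, v} : Finset (Fin m)) ∈ K.faces := by
  obtain ⟨a, b, hab, hne, ha, hb⟩ :=
    hK c hnd h4 fun j => Cycle.chain_coe_iff_getElem.1 hc j j.2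
  wlog hlt : a < b generalizing a b
  · exact this b a (by rwa [Finset.pair_comm]) hne.symm hb ha
      (lt_of_le_of_ne (not_lt.1 hlt) hne.symm)
  rw [Fin.lt_def] at hlt
  have hsplit := List.eq_take_append_cons_append_cons hlt b.2
  refine ⟨c.get a, c.get b, (c.drop (a + 1)).take (b - a - 1), c.drop (b + 1) ++ c.take a, ?_,
    ?_, ?_, hab⟩
  · nth_rw 1 [hsplit]
    convert List.isRotated_append using 1
    simp only [List.cons_append, List.append_assoc, List.get_eq_getElem]
  · rw [Nat.mod_eq_of_lt (by omega : a.1 + 1 < c.length)] at ha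
    simp only [ne_eq, List.take_eq_nil_iff, List.drop_eq_nil_iff, not_or]
    omega
  · have : a.1 ≠ 0 ∨ b.1 + 1 < c.length := by
      by_contra! h
      exact hb (by rw [show b.1 + 1 = c.length by omega, Nat.mod_self, h.1])
    simp only [ne_eq, List.append_eq_nil_iff, List.drop_eq_nil_iff, List.take_eq_nil_iff,
      List.ne_nil_of_length_pos (by omega : 0 < c.length), or_false, not_and]
    omega

theorem cycleChain_mem_boundaries (hflag : K.IsFlag) (hK : IsChordal K) {c : List (Fin m)}
    (hnd : c.Nodup) (h3 : 3 ≤ c.length)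
    (hc : Cycle.Chain (fun u v => ({u, v} : Finset (Fin m)) ∈ (K.full I).faces)
      (c : Cycle (Fin m))) :
    cycleChain k c ∈ (K.full I).boundaries k := by
  induction hn : c.length using Nat.strong_induction_on generalizing c with
  | _ n ih =>
    rcases h3.eq_or_lt with h3 | h4
    · obtain ⟨a, b, d, rfl⟩ := List.length_eq_three.1 h3.symm
      exact cycleChain_triangle_mem_boundaries (hflag.full I) hnd hc
    have hI : ∀ w ∈ c, w ∈ I := fun w hw => by
      obtain ⟨i, hi, rfl⟩ := List.getElem_of_mem hw
      exact (Cycle.chain_coe_iff_getElem.1 hc i hi).2 (by simp)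
    obtain ⟨u, v, Q, R, hrot, hQ, hR, huv⟩ :=
      hK.exists_chord hnd (by omega) (Cycle.Chain.imp (fun _ _ h => h.1) hc)
    have huvI : ({u, v} : Finset (Fin m)) ∈ (K.full I).faces := by
      refine ⟨huv, fun w hw => hI w (hrot.mem_iff.2 ?_)⟩
      simp only [Finset.coe_insert, Finset.coe_singleton, Set.mem_insert_iff,
        Set.mem_singleton_iff] at hw
      rcases hw with rfl | rfl <;> simp
    rw [Cycle.coe_eq_coe.2 hrot] at hc
    have hnd₁ := hrot.nodup_iff.1 hnd
    have hnd₂ : (v :: R ++ u :: Q).Nodup := List.isRotated_append.nodup_iff.1 hnd₁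
    have hne : u ≠ v := by
      simp only [List.nodup_cons, List.mem_append, List.mem_cons, not_or] at hnd₁
      exact hnd₁.1.2.1
    obtain ⟨hc₁, hc₂⟩ := hc.split huvI (by rwa [Finset.pair_comm])
    rw [cycleChain_eq_of_isRotated k hrot, cycleChain_append_cons k hne]
    have hlen := hrot.perm.length_eq
    have hQ := List.length_pos_iff.2 hQ
    have hR := List.length_pos_iff.2 hR
    simp only [List.length_cons, List.length_append] at hlen
    refine add_mem (ih _ ?_ (hnd₁.sublist (by simp)) ?_ hc₁ rfl)
      (ih _ ?_ (hnd₂.sublist (by simp)) ?_ hc₂ rfl)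
    all_goals simp only [List.length_cons, List.length_append, List.length_nil]; omega

theorem exists_cycle_of_bdry_eq_zero {x : Finset (Fin m) →₀ k}
    (hx : ∀ σ ∈ x.support, σ.card = 2) (hb : bdry k m x = 0) (hx₀ : x ≠ 0) :
    ∃ c : List (Fin m), c.Nodup ∧ 3 ≤ c.length ∧
      Cycle.Chain (fun u v => ({u, v} : Finset (Fin m)) ∈ x.support) (c : Cycle (Fin m)) := by
  obtain ⟨σ, hσ⟩ := Finsupp.support_nonempty_iff.2 hx₀
  obtain ⟨a, b, hab, rfl⟩ := Finset.card_eq_two.1 (hx σ hσ)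
  refine exists_cycle_of_isChain (fun u v h => by rwa [Finset.pair_comm]) (fun u h => ?_)
    (fun u v h => exists_ne_mem_support_of_bdry_eq_zero k hx hb h) [a, b] (by simp [hab])
    (by simp) (by simpa using hσ)
  simpa using hx _ h

theorem mem_boundaries_of_bdry_eq_zero (hflag : K.IsFlag) (hK : IsChordal K)
    {x : Finset (Fin m) →₀ k} (hx : x ∈ (K.full I).chains k 2) (hb : bdry k m x = 0) :
    x ∈ (K.full I).boundaries k := by
  induction hn : x.support.card using Nat.strong_induction_on generalizing x with
  | _ n ih =>
    by_cases hx₀ : x = 0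
    · exact hx₀ ▸ zero_mem _
    rw [SComplex.mem_chains] at hx
    obtain ⟨c, hnd, h3, hc⟩ :=
      exists_cycle_of_bdry_eq_zero (fun σ hσ => (hx σ hσ).2) hb hx₀
    set z := cycleChain k c
    have hzx : z.support ⊆ x.support := fun σ hσ => by
      obtain ⟨u, v, huv, rfl⟩ := exists_rel_of_mem_support_cycleChain k hc hσ
      exact huv
    have hzB : z ∈ (K.full I).boundaries k :=
      cycleChain_mem_boundaries hflag hK hnd h3 (hc.imp fun _ _ h => (hx _ h).1)
    have hzb : bdry k m z = 0 := bdry_cycleChain k <| hc.imp fun u v h huv => by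
      simpa [huv] using (hx _ h).2
    obtain ⟨σ, hσ⟩ := Finsupp.ne_iff.1 (cycleChain_ne_zero k hnd h3)
    set x' := x - (x σ / z σ) • z
    have hx' : x' ∈ (K.full I).chains k 2 :=
      sub_mem (SComplex.mem_chains.2 hx)
        (Submodule.smul_mem _ _ (SComplex.mem_chains.2 fun τ hτ => hx τ (hzx hτ)))
    have hx'B := ih _ (hn ▸ Finsupp.card_support_sub_smul_lt hzx hσ) hx'
      (by simp [x', hb, hzb]) rfl
    simpa [x'] using add_mem hx'B (Submodule.smul_mem _ (x σ / z σ) hzB)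

theorem card_ne_three_of_chordless {c : List (Fin m)} (h4 : 4 ≤ c.length)
    (hno : ∀ a b : Fin c.length, ({c.get a, c.get b} : Finset (Fin m)) ∈ K.faces → a ≠ b →
      (a.1 + 1) % c.length = b ∨ (b.1 + 1) % c.length = a)
    {τ : Finset (Fin m)} (hτ : τ ∈ (K.full {v | v ∈ c}).faces) : τ.card ≠ 3 := by
  intro h3
  obtain ⟨u₁, u₂, u₃, h₁₂, h₁₃, h₂₃, rfl⟩ := Finset.card_eq_three.1 h3
  obtain ⟨i₁, rfl⟩ := List.mem_iff_get.1 (hτ.2 (by simp) : u₁ ∈ c)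
  obtain ⟨i₂, rfl⟩ := List.mem_iff_get.1 (hτ.2 (by simp) : u₂ ∈ c)
  obtain ⟨i₃, rfl⟩ := List.mem_iff_get.1 (hτ.2 (by simp) : u₃ ∈ c)
  have hadj (a b : Fin c.length) (hab : c.get a ≠ c.get b)
      (hsub : ({c.get a, c.get b} : Finset (Fin m)) ⊆ {c.get i₁, c.get i₂, c.get i₃}) :=
    hno a b (K.down_closed hτ.1 hsub) (fun h => hab (h ▸ rfl))
  have := Nat.le_three_of_cyclic_triangle i₁.2 i₂.2 i₃.2 (hadj i₁ i₂ h₁₂ (by simp))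
    (hadj i₂ i₃ h₂₃ (by simp)) (hadj i₁ i₃ h₁₃ (by simp))
  omega

theorem IsChordal.of_forall_mem_boundaries
    (hH : ∀ (I : Set (Fin m)), ∀ x ∈ (K.full I).chains k 2, bdry k m x = 0 →
      x ∈ (K.full I).boundaries k) : IsChordal K := by
  intro c hnd h4 hedge
  by_contra! hno
  set I : Set (Fin m) := {v | v ∈ c}
  have hc : Cycle.Chain (fun u v => ({u, v} : Finset (Fin m)) ∈ (K.full I).faces ∧ u ≠ v)
      (c : Cycle (Fin m)) := by
    rw [Cycle.chain_coe_iff_getElem]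
    intro i hi
    refine ⟨⟨hedge ⟨i, hi⟩, fun w hw => ?_⟩, fun h => ?_⟩
    · simp only [Finset.coe_insert, Finset.coe_singleton, Set.mem_insert_iff,
        Set.mem_singleton_iff] at hw
      rcases hw with rfl | rfl <;> exact List.getElem_mem _
    · have := hnd.getElem_inj_iff.1 h
      rcases Nat.add_one_mod_eq_or hi with h' | h' <;> omega
  have hz : cycleChain k c ∈ (K.full I).chains k 2 := SComplex.mem_chains.2 fun σ hσ => by
    obtain ⟨u, v, ⟨huv, hne⟩, rfl⟩ := exists_rel_of_mem_support_cycleChain k hc hσ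
    exact ⟨huv, Finset.card_pair hne⟩
  obtain ⟨y, hy, hyz⟩ := hH I _ hz (bdry_cycleChain k (hc.imp fun _ _ h => h.2))
  have hy₀ : y = 0 := Finsupp.support_eq_empty.1 <| Finset.eq_empty_of_forall_notMem fun σ hσ =>
    card_ne_three_of_chordless h4 (fun a b hab hne => or_iff_not_imp_left.2 (hno a b hab hne))
      (hy hσ).1 (hy hσ).2
  exact cycleChain_ne_zero k hnd (by omega) (by rw [← hyz, hy₀, map_zero])

end Boundaries

/-- The 1-skeleton of a flag complex `K` is chordal if and only if
`H₁(K_I; k) = 0` for every full subcomplex `K_I` of `K`, i.e. every 1-cycle supported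
on `K_I` is the boundary of a 2-chain supported on `K_I`. -/
theorem chordal_iff_H1_vanishes {m : ℕ} (k : Type) [Field k]
    (K : SComplex m) (hflag : K.IsFlag) :
    IsChordal K ↔
      ∀ (I : Set (Fin m)) (x : Finset (Fin m) →₀ k),
        (∀ σ ∈ x.support, σ ∈ (K.full I).faces ∧ σ.card = 2) →
        bdry k m x = 0 →
        ∃ y : Finset (Fin m) →₀ k,
          (∀ σ ∈ y.support, σ ∈ (K.full I).faces ∧ σ.card = 3) ∧ bdry k m y = x := by
  simp only [← SComplex.mem_chains, ← SComplex.mem_boundaries]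
  exact ⟨fun hK I x => mem_boundaries_of_bdry_eq_zero hflag hK,
    IsChordal.of_forall_mem_boundaries⟩
end
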